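/- arXiv:2205.06042 — 6 statements merged into one kernel-verified Lean document; each statement's English description precedes it below -/
import Mathlib

section
/- Every inclusion-wise maximal path in G_M that shares no arc with any pipe of M contains at most one needed vertex. Equivalently, the family of maximal pipe-arc-free paths decomposes as H(M) = H_0(M) ⊔ H_1(M), where H_r(M) is the set of such paths containing exactly r needed vertices. -/
/-- A pipe `π_{s,e}^t` of the magazine state sequence `M`. -/
def IsPipe (n : ℕ) (T M : ℕ → Finset ℕ) (s e t : ℕ) : Prop :=
  1 ≤ s ∧ s < e ∧ e ≤ n ∧ t ∈ T s ∧ t ∈ T e ∧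
    ∀ i, s < i → i < e → t ∉ T i ∧ t ∈ M i

/-- A path of `G_M` following tool `t` on the interval `[a, b]`. -/
def IsPath (n : ℕ) (M : ℕ → Finset ℕ) (t a b : ℕ) : Prop :=
  1 ≤ a ∧ a ≤ b ∧ b ≤ n ∧ ∀ i, a ≤ i → i ≤ b → t ∈ M i

/-- A path of `G_M` that shares no arc with any pipe of `M` (an element of
`H*(M)`).  The arc `((i,t),(i+1,t))` belongs to a pipe `(s,e,t)` when
`s ≤ i < e`, and to the path when `a ≤ i < b`. -/
def FreePath (n : ℕ) (T M : ℕ → Finset ℕ) (t a b : ℕ) : Prop :=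
  IsPath n M t a b ∧
    ∀ s e, IsPipe n T M s e t → ∀ i, s ≤ i → i < e → ¬(a ≤ i ∧ i < b)

/-- An inclusion-wise maximal pipe-arc-free path (an element of `H(M)`). -/
def MaxFreePath (n : ℕ) (T M : ℕ → Finset ℕ) (t a b : ℕ) : Prop :=
  FreePath n T M t a b ∧
    ∀ a' b', a' ≤ a → b ≤ b' → FreePath n T M t a' b' → a' = a ∧ b' = b

/-- every inclusion-wise maximal pipe-arc-free path of `G_M`
contains at most one needed vertex (a vertex `(i,t)` with `t ∈ T i`); hence
`H(M) = H₀(M) ⊔ H₁(M)`. -/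
theorem maxFreePath_at_most_one_needed (n : ℕ) (T M : ℕ → Finset ℕ)
    (hTM : ∀ i ∈ Finset.Icc 1 n, T i ⊆ M i)
    (t a b : ℕ) (h : MaxFreePath n T M t a b) :
    ((Finset.Icc a b).filter (fun i => t ∈ T i)).card ≤ 1 := by
  by_contra hc
  push_neg at hc
  obtain ⟨⟨ha1, hab, hbn, hM⟩, hfree⟩ := h.1
  obtain ⟨i, hi, j, hj, hij⟩ := Finset.one_lt_card.mp hc
  -- wlog i < j
  wlog hlt : i < j generalizing i j
  · exact this j hj i hi hij.symm (hij.lt_or_gt.resolve_left hlt)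
  -- pick the least needed index strictly greater than i
  set S' := ((Finset.Icc a b).filter (fun k => t ∈ T k)).filter (fun k => i < k) with hS'
  have hjS' : j ∈ S' := Finset.mem_filter.mpr ⟨hj, hlt⟩
  have hne : S'.Nonempty := ⟨j, hjS'⟩
  set e := S'.min' hne with he
  have heS' : e ∈ S' := S'.min'_mem hne
  obtain ⟨heS, hie⟩ := Finset.mem_filter.mp heS'
  obtain ⟨heIcc, htTe⟩ := Finset.mem_filter.mp heS
  obtain ⟨hae, heb⟩ := Finset.mem_Icc.mp heIcc
  obtain ⟨hiIcc, htTi⟩ := Finset.mem_filter.mp hi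
  obtain ⟨hai, hib⟩ := Finset.mem_Icc.mp hiIcc
  have hpipe : IsPipe n T M i e t := by
    refine ⟨le_trans ha1 hai, hie, le_trans heb hbn, htTi, htTe, ?_⟩
    intro k hik hke
    have hak : a ≤ k := le_trans hai (le_of_lt hik)
    have hkb : k ≤ b := le_trans (le_of_lt hke) heb
    refine ⟨?_, hM k hak hkb⟩
    intro htk
    have : k ∈ S' := Finset.mem_filter.mpr
      ⟨Finset.mem_filter.mpr ⟨Finset.mem_Icc.mpr ⟨hak, hkb⟩, htk⟩, hik⟩
    exact absurd (S'.min'_le k this) (not_le.mpr hke)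
  exact hfree i e hpipe i le_rfl hie ⟨hai, lt_of_lt_of_le hie heb⟩
end

section
/- Suppose M_1,...,M_n ⊆ T satisfy |M_i| ≤ C for all i, with strict inequality for some i, and suppose that whenever |M_i| < C we have M_{i-1} ∪ M_{i+1} ⊆ M_i (with out-of-range terms treated as empty). Then M_1 = M_2 = ... = M_n and |M_1| < C. -/
/-- if `M 1, …, M n` satisfy `|M i| ≤ C` with strict inequality
for some `i`, and every deficient state absorbs its neighbours
(`|M i| < C → M (i-1) ∪ M (i+1) ⊆ M i`, out-of-range terms being empty), then
all states are equal and deficient. -/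
theorem all_states_equal_of_deficient_absorbing (n C : ℕ) (M : ℕ → Finset ℕ)
    (hn : 1 ≤ n)
    (hcard : ∀ i ∈ Finset.Icc 1 n, (M i).card ≤ C)
    (hdef : ∃ i ∈ Finset.Icc 1 n, (M i).card < C)
    (habs : ∀ i ∈ Finset.Icc 1 n, (M i).card < C →
      (if i = 1 then (∅ : Finset ℕ) else M (i - 1)) ∪
        (if i = n then (∅ : Finset ℕ) else M (i + 1)) ⊆ M i) :
    (∀ i ∈ Finset.Icc 1 n, M i = M 1) ∧ (M 1).card < C := by
  obtain ⟨i₀, hi₀, hdi₀⟩ := hdef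
  rw [Finset.mem_Icc] at hi₀
  -- forward step: deficiency propagates to i+1 with M (i+1) ⊆ M i
  have fwd : ∀ i, 1 ≤ i → i < n → (M i).card < C →
      (M (i+1)).card < C ∧ M (i+1) ⊆ M i := by
    intro i h1 h2 hd
    have h := habs i (Finset.mem_Icc.mpr ⟨h1, le_of_lt h2⟩) hd
    rw [if_neg (by omega : i ≠ n)] at h
    have hsub : M (i+1) ⊆ M i := fun x hx => h (Finset.mem_union_right _ hx)
    exact ⟨lt_of_le_of_lt (Finset.card_le_card hsub) hd, hsub⟩
  -- backward step
  have bwd : ∀ i, 1 < i → i ≤ n → (M i).card < C →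
      (M (i-1)).card < C ∧ M (i-1) ⊆ M i := by
    intro i h1 h2 hd
    have h := habs i (Finset.mem_Icc.mpr ⟨by omega, h2⟩) hd
    rw [if_neg (by omega : i ≠ 1)] at h
    have hsub : M (i-1) ⊆ M i := fun x hx => h (Finset.mem_union_left _ hx)
    exact ⟨lt_of_le_of_lt (Finset.card_le_card hsub) hd, hsub⟩
  -- all states are deficient
  have hP : ∀ i, 1 ≤ i → i ≤ n → (M i).card < C := by
    have down : ∀ d i, i + d = i₀ → 1 ≤ i → (M i).card < C := by
      intro d
      induction d with
      | zero =>
        intro i hi _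
        have : i = i₀ := by omega
        rw [this]; exact hdi₀
      | succ d ih =>
        intro i hi h1
        have h := bwd (i+1) (by omega) (by omega) (ih (i+1) (by omega) (by omega))
        simpa using h.1
    have up : ∀ d i, i = i₀ + d → i ≤ n → (M i).card < C := by
      intro d
      induction d with
      | zero =>
        intro i hi _
        rw [show i = i₀ by omega]; exact hdi₀
      | succ d ih =>
        intro i hi hle
        have h := fwd (i-1) (by omega) (by omega) (ih (i-1) (by omega) (by omega))
        have : i - 1 + 1 = i := by omega
        rw [this] at h
        exact h.1
    intro i h1 h2
    rcases le_or_gt i i₀ with h | h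
    · exact down (i₀ - i) i (by omega) h1
    · exact up (i - i₀) i (by omega) h2
  -- all states equal M 1
  have heq : ∀ i, 1 ≤ i → i ≤ n → M i = M 1 := by
    intro i
    induction i with
    | zero => intro h; omega
    | succ i ih =>
      intro h1 h2
      rcases Nat.eq_or_lt_of_le h1 with h | h
      · rw [← h]
      · have hi1 : 1 ≤ i := by omega
        have hin : i < n := by omega
        have s1 : M (i+1) ⊆ M i := (fwd i hi1 hin (hP i hi1 (by omega))).2
        have s2 : M i ⊆ M (i+1) := by
          have := (bwd (i+1) (by omega) h2 (hP (i+1) (by omega) h2)).2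
          simpa using this
        rw [Finset.Subset.antisymm s1 s2]
        exact ih hi1 (by omega)
  refine ⟨fun i hi => ?_, hP 1 le_rfl hn⟩
  rw [Finset.mem_Icc] at hi
  exact heq i hi.1 hi.2
end

section
/- Let T_1,...,T_n ⊆ T with |∪_i T_i| > C. If M_1,...,M_n satisfy T_i ⊆ M_i, |M_i| ≤ C for all i, and some M_j has |M_j| < C, then there exists an index i with |M_i| < C and a tool t ∉ M_i such that t ∈ M_{i-1} ∪ M_{i+1} (indices out of range contributing the empty set). -/
/-- if the jobs together require more than `C` tools
(`|⋃ᵢ Tᵢ| > C`), the magazine states contain their job tool sets, have at most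
`C` tools each, and some state has an empty slot, then there is a state `M i`
with an empty slot and a tool `t ∉ M i` present in a neighbouring state
`M (i-1) ∪ M (i+1)` (out-of-range terms being empty). -/
theorem exists_fillable_empty_slot (n C : ℕ) (T M : ℕ → Finset ℕ)
    (hn : 1 ≤ n)
    (hunion : C < ((Finset.Icc 1 n).biUnion T).card)
    (hTM : ∀ i ∈ Finset.Icc 1 n, T i ⊆ M i)
    (hcard : ∀ i ∈ Finset.Icc 1 n, (M i).card ≤ C)
    (hdef : ∃ j ∈ Finset.Icc 1 n, (M j).card < C) :
    ∃ i ∈ Finset.Icc 1 n, (M i).card < C ∧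
      ∃ t, t ∉ M i ∧
        t ∈ (if i = 1 then (∅ : Finset ℕ) else M (i - 1)) ∪
              (if i = n then (∅ : Finset ℕ) else M (i + 1)) := by
  by_contra hcon
  push_neg at hcon
  obtain ⟨j, hj, hjC⟩ := hdef
  have hjr : 1 ≤ j ∧ j ≤ n := Finset.mem_Icc.mp hj
  -- for any deficient state, both neighbors are contained in it
  have key : ∀ i ∈ Finset.Icc 1 n, (M i).card < C →
      ((if i = 1 then (∅ : Finset ℕ) else M (i - 1)) ∪
        (if i = n then (∅ : Finset ℕ) else M (i + 1))) ⊆ M i := by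
    intro i hi hlt t ht
    by_contra htM
    exact hcon i hi hlt t htM ht
  have fwd : ∀ k, j + k ≤ n → M (j + k) ⊆ M j := by
    intro k
    induction k with
    | zero => intro _; exact Finset.Subset.refl _
    | succ k ih =>
      intro hk
      have hsub := ih (by omega)
      have hmem : j + k ∈ Finset.Icc 1 n := Finset.mem_Icc.mpr ⟨by omega, by omega⟩
      have hlt : (M (j + k)).card < C := lt_of_le_of_lt (Finset.card_le_card hsub) hjC
      have hk2 := key (j + k) hmem hlt
      have hne : j + k ≠ n := by omega
      intro t ht
      apply hsub
      apply hk2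
      rw [Finset.mem_union]
      right
      rw [if_neg hne]
      exact ht
  have bwd : ∀ k, k < j → M (j - k) ⊆ M j := by
    intro k
    induction k with
    | zero => intro _; exact Finset.Subset.refl _
    | succ k ih =>
      intro hk
      have hsub := ih (by omega)
      have hmem : j - k ∈ Finset.Icc 1 n := Finset.mem_Icc.mpr ⟨by omega, by omega⟩
      have hlt : (M (j - k)).card < C := lt_of_le_of_lt (Finset.card_le_card hsub) hjC
      have hk2 := key (j - k) hmem hlt
      have hne : j - k ≠ 1 := by omega
      intro t ht
      apply hsub
      apply hk2
      rw [Finset.mem_union]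
      left
      rw [if_neg hne]
      rwa [show j - k - 1 = j - (k + 1) by omega]
  have hall : ∀ i ∈ Finset.Icc 1 n, M i ⊆ M j := by
    intro i hi
    obtain ⟨h1, h2⟩ := Finset.mem_Icc.mp hi
    rcases le_or_gt j i with h | h
    · have := fwd (i - j) (by omega)
      rwa [show j + (i - j) = i by omega] at this
    · have := bwd (j - i) (by omega)
      rwa [show j - (j - i) = i by omega] at this
  have hsub : ((Finset.Icc 1 n).biUnion T) ⊆ M j := by
    intro t ht
    obtain ⟨i, hi, hti⟩ := Finset.mem_biUnion.mp ht
    exact hall i hi (hTM i hi hti)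
  have := Finset.card_le_card hsub
  omega
end

section
/- For a fixed job sequence S, the minimum number of tool switches over all full magazine state sequences equals Σ_{i=1}^n |T_i| − C − max over all full magazine state sequences M of the number of pipes of M. That is, min_{M ∈ M(S)} switches(M) = Σ_{i=1}^n |T_i| − C − max_{M ∈ M(S)} |T(M)|. -/
/-- Total number of tool switches of a magazine state sequence. -/
def switches (n C : ℕ) (M : ℕ → Finset ℕ) : ℕ :=
  ∑ i ∈ Finset.Icc 1 (n - 1), (C - ((M i) ∩ (M (i + 1))).card)

/-- `T(M)`: the set of pipes of `M`, as triples `(s, e, t)`. -/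
def pipeSet (n : ℕ) (T M : ℕ → Finset ℕ) : Set (ℕ × ℕ × ℕ) :=
  {p | IsPipe n T M p.1 p.2.1 p.2.2}

/-- `M(S)`: full magazine state sequences feasible for the job order
`1, …, n`: `T i ⊆ M i` and `|M i| = C` at every instant. -/
def MS (n C : ℕ) (T : ℕ → Finset ℕ) : Set (ℕ → Finset ℕ) :=
  {M | ∀ i ∈ Finset.Icc 1 n, T i ⊆ M i ∧ (M i).card = C}

/-!
Count the occurrences `⟨i, t⟩` with `t ∈ T i`. For a feasible `M`, an occurrence either ends a
pipe of `M` (a pipe is determined by its end, so there are `|T(M)|` of these) or is the first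
occurrence of `t` in its `M`-run. Distinct first occurrences lie in distinct runs, and the runs are
counted by their starts: `C` at instant `1` plus one per switch. Hence
`Σ |T i| ≤ |T(M)| + C + switches M`, with equality when every run contains an occurrence.
From any `M₀` a lazy schedule gives such an `M` with `T(M₀) ⊆ T(M)`: start with the `C` tools
needed first and keep each of them until its first use; afterwards insert a tool only when the
current job needs it, and keep every tool that a pipe of `M₀` carries. A switch-minimal and a
pipe-maximal sequence then give the two inequalities of the theorem.
-/

open Finset

namespace ToolSwitching

section Runs

variable {M : ℕ → Finset ℕ} {t : ℕ}

/-- The `M`-run of tool `t` that contains instant `i` starts at instant `j`. -/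
structure IsRunStart (M : ℕ → Finset ℕ) (t j i : ℕ) : Prop where
  one_le : 1 ≤ j
  le : j ≤ i
  start : j = 1 ∨ t ∉ M (j - 1)
  mem : ∀ l, j ≤ l → l ≤ i → t ∈ M l

theorem exists_isRunStart {i : ℕ} (hi : 1 ≤ i) (ht : t ∈ M i) : ∃ j, IsRunStart M t j i := by
  induction i, hi using Nat.le_induction with
  | base => exact ⟨1, le_rfl, le_rfl, Or.inl rfl, fun l h₁ h₂ => by rwa [le_antisymm h₂ h₁]⟩
  | succ i hi ih =>
    by_cases hprev : t ∈ M i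
    · obtain ⟨j, hj₁, hji, hstart, hrun⟩ := ih hprev
      refine ⟨j, hj₁, by omega, hstart, fun l hjl hli => ?_⟩
      rcases Nat.lt_or_ge l (i + 1) with h | h
      · exact hrun l hjl (by omega)
      · rwa [show l = i + 1 by omega]
    · exact ⟨i + 1, by omega, le_rfl, Or.inr hprev, fun l h₁ h₂ => by rwa [le_antisymm h₂ h₁]⟩

theorem IsRunStart.eq {j j' i : ℕ} (h : IsRunStart M t j i) (h' : IsRunStart M t j' i) :
    j = j' := by
  have := h.one_le
  have := h'.one_le
  rcases lt_trichotomy j j' with hlt | heq | hlt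
  · exact absurd (h.mem (j' - 1) (by omega) (by have := h'.le; omega))
      (h'.start.resolve_left (by omega))
  · exact heq
  · exact absurd (h'.mem (j - 1) (by omega) (by have := h.le; omega))
      (h.start.resolve_left (by omega))

theorem IsRunStart.mono {j i i' : ℕ} (h : IsRunStart M t j i) (hji' : j ≤ i') (hi' : i' ≤ i) :
    IsRunStart M t j i' :=
  ⟨h.one_le, hji', h.start, fun l hjl hli' => h.mem l hjl (hli'.trans hi')⟩

end Runs

section Pipes

variable {n : ℕ} {T M : ℕ → Finset ℕ} {t : ℕ}

theorem IsPipe.start_eq {s s' e : ℕ} (h : IsPipe n T M s e t) (h' : IsPipe n T M s' e t) :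
    s = s' := by
  obtain ⟨-, hse, -, hts, -, hint⟩ := h
  obtain ⟨-, hs'e, -, hts', -, hint'⟩ := h'
  rcases lt_trichotomy s s' with hlt | heq | hlt
  · exact absurd hts' (hint s' hlt hs'e).1
  · exact heq
  · exact absurd hts (hint' s hlt hse).1

theorem IsPipe.mono {M' : ℕ → Finset ℕ} {s e : ℕ} (h : IsPipe n T M s e t)
    (hM : ∀ i, s < i → i < e → t ∈ M i → t ∈ M' i) : IsPipe n T M' s e t := by
  obtain ⟨hs, hse, he, hts, hte, hint⟩ := h
  exact ⟨hs, hse, he, hts, hte, fun i h₁ h₂ => ⟨(hint i h₁ h₂).1, hM i h₁ h₂ (hint i h₁ h₂).2⟩⟩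

theorem exists_isPipe_of_mem_run {s e : ℕ} (hs : 1 ≤ s) (hse : s < e) (he : e ≤ n)
    (hts : t ∈ T s) (hte : t ∈ T e) (hrun : ∀ l, s < l → l < e → t ∈ M l) :
    ∃ s', IsPipe n T M s' e t := by
  classical
  let P : ℕ → Prop := fun l => t ∈ T l
  set s' := Nat.findGreatest P (e - 1)
  have hss' : s ≤ s' := Nat.le_findGreatest (P := P) (by omega) hts
  have hs'e : s' ≤ e - 1 := Nat.findGreatest_le (P := P) (e - 1)
  refine ⟨s', by omega, by omega, he, Nat.findGreatest_spec (P := P) (by omega) hts, hte,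
    fun l hl hle => ⟨Nat.findGreatest_is_greatest (P := P) hl (by omega), hrun l (by omega) hle⟩⟩

end Pipes

section Counting

variable {n C : ℕ} {T M : ℕ → Finset ℕ}

def occurrences (n : ℕ) (T : ℕ → Finset ℕ) : Finset (Σ _ : ℕ, ℕ) :=
  (Icc 1 n).sigma T

open Classical in
noncomputable def pipeEnds (n : ℕ) (T M : ℕ → Finset ℕ) : Finset (Σ _ : ℕ, ℕ) :=
  {p ∈ occurrences n T | ∃ s, IsPipe n T M s p.1 p.2}

open Classical in
noncomputable def runStarts (n : ℕ) (M : ℕ → Finset ℕ) : Finset (Σ _ : ℕ, ℕ) :=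
  (Icc 1 n).sigma fun j => {t ∈ M j | j = 1 ∨ t ∉ M (j - 1)}

def EveryRunUsed (n : ℕ) (T M : ℕ → Finset ℕ) : Prop :=
  ∀ j t, ⟨j, t⟩ ∈ runStarts n M → ∃ k ≤ n, t ∈ T k ∧ IsRunStart M t j k

theorem mem_occurrences {i t : ℕ} : ⟨i, t⟩ ∈ occurrences n T ↔ i ∈ Icc 1 n ∧ t ∈ T i :=
  mem_sigma

theorem mem_pipeEnds {e t : ℕ} :
    ⟨e, t⟩ ∈ pipeEnds n T M ↔ ⟨e, t⟩ ∈ occurrences n T ∧ ∃ s, IsPipe n T M s e t := by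
  classical
  exact mem_filter

theorem mem_runStarts {j t : ℕ} : ⟨j, t⟩ ∈ runStarts n M ↔ j ≤ n ∧ IsRunStart M t j j := by
  classical
  simp only [runStarts, mem_sigma, mem_filter, mem_Icc]
  constructor
  · rintro ⟨⟨h₁, hn⟩, ht, hstart⟩
    exact ⟨hn, h₁, le_rfl, hstart, fun l h h' => by rwa [le_antisymm h' h]⟩
  · rintro ⟨hn, h⟩
    exact ⟨⟨h.one_le, hn⟩, h.mem _ le_rfl le_rfl, h.start⟩

theorem pipeEnds_subset : pipeEnds n T M ⊆ occurrences n T := by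
  classical
  exact filter_subset _ _

theorem card_occurrences : (occurrences n T).card = ∑ i ∈ Icc 1 n, (T i).card :=
  card_sigma _ _

theorem ncard_pipeSet : (pipeSet n T M).ncard = (pipeEnds n T M).card := by
  let f : ℕ × ℕ × ℕ → Σ _ : ℕ, ℕ := fun p => ⟨p.2.1, p.2.2⟩
  have hinj : Set.InjOn f (pipeSet n T M) := by
    rintro ⟨s, e, t⟩ hp ⟨s', e', t'⟩ hp' hf
    simp only [f, Sigma.mk.injEq, heq_eq_eq] at hf
    obtain ⟨rfl, rfl⟩ := hf
    rw [(IsPipe.start_eq (s := s) (s' := s') hp hp' : s = s')]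
  have himage : f '' pipeSet n T M = pipeEnds n T M := by
    ext ⟨e, t⟩
    simp only [Set.mem_image, mem_coe, mem_pipeEnds, mem_occurrences, mem_Icc]
    constructor
    · rintro ⟨⟨s, e', t'⟩, hp : IsPipe n T M s e' t', hf⟩
      simp only [f, Sigma.mk.injEq, heq_eq_eq] at hf
      obtain ⟨rfl, rfl⟩ := hf
      exact ⟨⟨⟨hp.1.trans hp.2.1.le, hp.2.2.1⟩, hp.2.2.2.2.1⟩, s, hp⟩
    · rintro ⟨-, s, hp⟩
      exact ⟨⟨s, e, t⟩, hp, rfl⟩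
  rw [← hinj.ncard_image, himage, Set.ncard_coe_finset]

theorem card_runStarts (hn : 1 ≤ n) (hM : ∀ i ∈ Icc 1 n, (M i).card = C) :
    (runStarts n M).card = C + switches n C M := by
  classical
  obtain ⟨k, rfl⟩ : ∃ k, n = k + 1 := ⟨n - 1, by omega⟩
  have hIcc : Icc 1 (k + 1) = insert 1 ((Icc 1 k).map (addRightEmbedding 1)) := by
    rw [map_add_right_Icc, insert_Icc_add_one_left_eq_Icc (by omega)]
  rw [runStarts, card_sigma, hIcc, sum_insert (by simp), sum_map, switches, Nat.add_sub_cancel]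
  congr 1
  · rw [filter_true_of_mem fun _ _ => Or.inl rfl, hM 1 (by simp)]
  · refine sum_congr rfl fun i hi => ?_
    have hi1 : i + 1 ≠ 1 := by simp at hi; omega
    simp only [addRightEmbedding_apply, Nat.add_sub_cancel, hi1, false_or, filter_notMem_eq_sdiff]
    rw [card_sdiff, hM (i + 1) (by simp at hi ⊢; omega)]

theorem le_of_isRunStart_of_notMem_pipeEnds {j i i' t : ℕ} (hi : ⟨i, t⟩ ∈ occurrences n T)
    (hi' : ⟨i', t⟩ ∈ occurrences n T) (hend : ⟨i', t⟩ ∉ pipeEnds n T M)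
    (hr : IsRunStart M t j i) (hr' : IsRunStart M t j i') : i' ≤ i := by
  by_contra! hlt
  obtain ⟨hi, hti⟩ := mem_occurrences.1 hi
  obtain ⟨hi', hti'⟩ := mem_occurrences.1 hi'
  refine hend (mem_pipeEnds.2 ⟨mem_occurrences.2 ⟨hi', hti'⟩, ?_⟩)
  exact exists_isPipe_of_mem_run (mem_Icc.1 hi).1 hlt (mem_Icc.1 hi').2 hti hti'
    fun l hl hl' => hr'.mem l (hr.le.trans hl.le) hl'.le

theorem card_sdiff_pipeEnds_le_card_runStarts (hTM : ∀ i ∈ Icc 1 n, T i ⊆ M i) :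
    (occurrences n T \ pipeEnds n T M).card ≤ (runStarts n M).card := by
  refine card_le_card_of_forall_subsingleton
    (fun o s => o.2 = s.2 ∧ IsRunStart M o.2 s.1 o.1) (fun ⟨i, t⟩ ho => ?_) ?_
  · obtain ⟨hi, ht⟩ := mem_occurrences.1 (mem_sdiff.1 ho).1
    obtain ⟨j, hj⟩ := exists_isRunStart (mem_Icc.1 hi).1 (hTM i hi ht)
    exact ⟨⟨j, t⟩, mem_runStarts.2 ⟨hj.le.trans (mem_Icc.1 hi).2, hj.mono le_rfl hj.le⟩, rfl, hj⟩
  · rintro ⟨j, t⟩ - ⟨i, t₁⟩ ⟨ho, h₁, hr⟩ ⟨i', t₂⟩ ⟨ho', h₂, hr'⟩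
    dsimp only at h₁ h₂ hr hr'
    subst h₁ h₂
    obtain ⟨ho, hend⟩ := mem_sdiff.1 ho
    obtain ⟨ho', hend'⟩ := mem_sdiff.1 ho'
    rw [le_antisymm (le_of_isRunStart_of_notMem_pipeEnds ho' ho hend hr' hr)
      (le_of_isRunStart_of_notMem_pipeEnds ho ho' hend' hr hr')]

theorem card_runStarts_le_card_sdiff_pipeEnds (hTM : ∀ i ∈ Icc 1 n, T i ⊆ M i)
    (hused : EveryRunUsed n T M) :
    (runStarts n M).card ≤ (occurrences n T \ pipeEnds n T M).card := by
  classical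
  refine card_le_card_of_forall_subsingleton
    (fun s o => o.2 = s.2 ∧ IsRunStart M s.2 s.1 o.1) (fun ⟨j, t⟩ hs => ?_) ?_
  · have hex := hused j t hs
    obtain ⟨hkn, htk, hrun⟩ := Nat.find_spec hex
    set k := Nat.find hex
    have hk : k ∈ Icc 1 n := mem_Icc.2 ⟨hrun.one_le.trans hrun.le, hkn⟩
    refine ⟨⟨k, t⟩, mem_sdiff.2 ⟨mem_occurrences.2 ⟨hk, htk⟩, fun hpipe => ?_⟩, rfl, hrun⟩
    obtain ⟨s, hp⟩ := (mem_pipeEnds.1 hpipe).2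
    obtain ⟨hs₁, hsk, -, hts, -, hint⟩ : IsPipe n T M s k t := hp
    by_cases hjs : j ≤ s
    · exact Nat.find_min hex hsk ⟨by omega, hts, hrun.mono hjs hsk.le⟩
    · have hmem : t ∈ M (j - 1) := by
        rcases Nat.lt_or_ge s (j - 1) with h | h
        · exact (hint (j - 1) h (by have := hrun.le; omega)).2
        · rw [show j - 1 = s by omega]
          exact hTM s (mem_Icc.2 ⟨hs₁, by omega⟩) hts
      exact hrun.start.resolve_left (by omega) hmem
  · rintro ⟨i, t⟩ - ⟨j, t₁⟩ ⟨-, h₁, hr⟩ ⟨j', t₂⟩ ⟨-, h₂, hr'⟩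
    dsimp only at h₁ h₂ hr hr'
    subst h₁ h₂
    rw [hr.eq hr']

theorem sum_card_le_ncard_pipeSet_add (hn : 1 ≤ n) (hM : M ∈ MS n C T) :
    ∑ i ∈ Icc 1 n, (T i).card ≤ (pipeSet n T M).ncard + (C + switches n C M) := by
  rw [← card_occurrences, ncard_pipeSet, ← card_runStarts hn fun i hi => (hM i hi).2,
    ← card_sdiff_add_card_eq_card (pipeEnds_subset (M := M))]
  have := card_sdiff_pipeEnds_le_card_runStarts fun i hi => (hM i hi).1
  omega

theorem ncard_pipeSet_add_le_sum_card (hn : 1 ≤ n) (hM : M ∈ MS n C T)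
    (hused : EveryRunUsed n T M) :
    (pipeSet n T M).ncard + (C + switches n C M) ≤ ∑ i ∈ Icc 1 n, (T i).card := by
  rw [← card_occurrences, ncard_pipeSet, ← card_runStarts hn fun i hi => (hM i hi).2,
    ← card_sdiff_add_card_eq_card (pipeEnds_subset (M := M))]
  have := card_runStarts_le_card_sdiff_pipeEnds (fun i hi => (hM i hi).1) hused
  omega

end Counting

theorem exists_card_eq_forall_subset_or_superset {α : Type*} {Q : ℕ → Finset α}
    (hQ : Monotone Q) {C N : ℕ} (hN : C ≤ (Q N).card) :
    ∃ Z ⊆ Q N, Z.card = C ∧ ∀ i, Z ⊆ Q i ∨ Q i ⊆ Z := by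
  classical
  have hex : ∃ k, C ≤ (Q k).card := ⟨N, hN⟩
  have hkN : Nat.find hex ≤ N := Nat.find_min' hex hN
  have hmin : ∀ k < Nat.find hex, (Q k).card < C := fun k hk => not_le.1 (Nat.find_min hex hk)
  obtain ⟨Z, hlow, hZ, hZcard⟩ : ∃ Z, (∀ i < Nat.find hex, Q i ⊆ Z) ∧ Z ⊆ Q (Nat.find hex) ∧
      Z.card = C := by
    rcases h : Nat.find hex with _ | k
    · obtain ⟨Z, hZ, hZcard⟩ := exists_subset_card_eq (h ▸ Nat.find_spec hex)
      exact ⟨Z, fun i hi => absurd hi (Nat.not_lt_zero i), hZ, hZcard⟩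
    · obtain ⟨Z, hkZ, hZ, hZcard⟩ := exists_subsuperset_card_eq (hQ (Nat.le_add_right k 1))
        (hmin k (by omega)).le (by rw [← h]; exact Nat.find_spec hex)
      exact ⟨Z, fun i hi => (hQ (by omega)).trans hkZ, hZ, hZcard⟩
  refine ⟨Z, hZ.trans (hQ hkN), hZcard, fun i => ?_⟩
  rcases Nat.lt_or_ge i (Nat.find hex) with hi | hi
  · exact Or.inr (hlow i hi)
  · exact Or.inl (hZ.trans (hQ hi))

def IsLazy {α : Type*} [DecidableEq α] (n : ℕ) (G : ℕ → Finset α) (Z : Finset α)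
    (M : ℕ → Finset α) : Prop :=
  M 0 = Z ∧ ∀ j ∈ Icc 1 n, G j ⊆ M j ∧ M j ⊆ G j ∪ M (j - 1)

theorem exists_isLazy {α : Type*} [DecidableEq α] {C : ℕ} (n : ℕ) {Z : Finset α}
    {G : ℕ → Finset α} (hZ : Z.card = C) (hG : ∀ j ∈ Icc 1 n, (G j).card ≤ C) :
    ∃ M, IsLazy n G Z M ∧ ∀ j ∈ Icc 1 n, (M j).card = C := by
  induction n with
  | zero => exact ⟨fun _ => Z, ⟨rfl, fun j hj => by simp at hj⟩, fun j hj => by simp at hj⟩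
  | succ n ih =>
    obtain ⟨M, ⟨hM0, hM⟩, hMcard⟩ := ih fun j hj => hG j (by simp at hj ⊢; omega)
    have hMn : (M n).card = C := by
      rcases Nat.eq_zero_or_pos n with rfl | hn
      · rwa [hM0]
      · exact hMcard n (by simp; omega)
    obtain ⟨u, hGu, hu, hucard⟩ := exists_subsuperset_card_eq (subset_union_left (s₂ := M n))
      (hG (n + 1) (by simp)) (hMn ▸ card_le_card subset_union_right)
    refine ⟨fun j => if j = n + 1 then u else M j, ⟨by simpa using hM0, fun j hj => ?_⟩,
      fun j hj => ?_⟩ <;> rcases eq_or_ne j (n + 1) with rfl | hne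
    · simpa using ⟨hGu, hu⟩
    · have hj' : 1 ≤ j ∧ j ≤ n := by simp at hj; omega
      have hne' : j - 1 ≠ n + 1 := by omega
      simp only [hne, hne', if_false]
      exact hM j (mem_Icc.2 hj')
    · simpa using hucard
    · have hj' : 1 ≤ j ∧ j ≤ n := by simp at hj; omega
      simp only [hne, if_false]
      exact hMcard j (mem_Icc.2 hj')

section Construction

variable {n C : ℕ} {T : ℕ → Finset ℕ}

def usedBy (T : ℕ → Finset ℕ) (k : ℕ) : Finset ℕ :=
  (Icc 1 k).biUnion T

theorem usedBy_zero : usedBy T 0 = ∅ := by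
  simp [usedBy]

theorem usedBy_succ (k : ℕ) : usedBy T (k + 1) = usedBy T k ∪ T (k + 1) := by
  rw [usedBy, ← insert_Icc_right_eq_Icc_add_one (by omega), biUnion_insert, union_comm, usedBy]

theorem monotone_usedBy : Monotone (usedBy T) := fun _ _ h =>
  biUnion_subset_biUnion_of_subset_left _ (Icc_subset_Icc le_rfl h)

theorem subset_usedBy {i k : ℕ} (hi : 1 ≤ i) (hik : i ≤ k) : T i ⊆ usedBy T k :=
  subset_biUnion_of_mem T (mem_Icc.2 ⟨hi, hik⟩)

theorem exists_first_use {t : ℕ} (h : t ∈ usedBy T n) :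
    ∃ k, 1 ≤ k ∧ k ≤ n ∧ t ∈ T k ∧ ∀ l < k, t ∉ usedBy T l := by
  classical
  have hex : ∃ k, t ∈ usedBy T k := ⟨n, h⟩
  obtain ⟨k, hk⟩ : ∃ k, Nat.find hex = k + 1 := by
    refine Nat.exists_eq_add_one_of_ne_zero fun h0 => ?_
    simpa [h0, usedBy_zero] using Nat.find_spec hex
  have hnot : ∀ l < k + 1, t ∉ usedBy T l := fun l hl => Nat.find_min hex (hk ▸ hl)
  have hmem : t ∈ usedBy T (k + 1) := hk ▸ Nat.find_spec hex
  rw [usedBy_succ, mem_union] at hmem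
  exact ⟨k + 1, by omega, hk ▸ Nat.find_min' hex h, hmem.resolve_left (hnot k (by omega)), hnot⟩

open Classical in
noncomputable def pipeTools (n : ℕ) (T M : ℕ → Finset ℕ) (i : ℕ) : Finset ℕ :=
  {t ∈ M i | ∃ s e, IsPipe n T M s e t ∧ s < i ∧ i < e}

theorem mem_pipeTools {M : ℕ → Finset ℕ} {i t : ℕ} :
    t ∈ pipeTools n T M i ↔ t ∈ M i ∧ ∃ s e, IsPipe n T M s e t ∧ s < i ∧ i < e := by
  classical
  exact mem_filter

theorem pipeTools_subset_usedBy {M : ℕ → Finset ℕ} (i : ℕ) :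
    pipeTools n T M i ⊆ usedBy T (i - 1) := fun t ht => by
  obtain ⟨-, s, e, hp, hsi, -⟩ := mem_pipeTools.1 ht
  exact subset_usedBy hp.1 (by omega) hp.2.2.2.1

theorem pipeEnds_subset_pipeEnds {M M' : ℕ → Finset ℕ}
    (h : ∀ i ∈ Icc 1 n, pipeTools n T M i ⊆ M' i) : pipeEnds n T M ⊆ pipeEnds n T M' := by
  rintro ⟨e, t⟩ hpe
  obtain ⟨hocc, s, hp⟩ := mem_pipeEnds.1 hpe
  refine mem_pipeEnds.2 ⟨hocc, s, IsPipe.mono hp fun i hsi hie hti => h i ?_ ?_⟩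
  · have := hp.1; have := hp.2.2.1; exact mem_Icc.2 ⟨by omega, by omega⟩
  · exact mem_pipeTools.2 ⟨hti, s, e, hp, hsi, hie⟩

noncomputable def demand (n : ℕ) (T M₀ : ℕ → Finset ℕ) (Z : Finset ℕ) (i : ℕ) : Finset ℕ :=
  T i ∪ pipeTools n T M₀ i ∪ (Z \ usedBy T (i - 1))

variable {M₀ : ℕ → Finset ℕ} {Z : Finset ℕ}

theorem mem_demand {i t : ℕ} : t ∈ demand n T M₀ Z i ↔
    t ∈ T i ∨ t ∈ pipeTools n T M₀ i ∨ t ∈ Z \ usedBy T (i - 1) := by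
  rw [demand, mem_union, mem_union, or_assoc]

theorem card_demand_le (hM₀ : M₀ ∈ MS n C T) (hZ : Z.card = C)
    (hchain : ∀ i, Z ⊆ usedBy T i ∨ usedBy T i ⊆ Z) {i : ℕ} (hi : i ∈ Icc 1 n) :
    (demand n T M₀ Z i).card ≤ C := by
  obtain ⟨k, rfl⟩ : ∃ k, i = k + 1 := ⟨i - 1, by simp at hi; omega⟩
  rw [demand, Nat.add_sub_cancel]
  rcases hchain (k + 1) with hZk | hkZ
  · have hpad : Z \ usedBy T k ⊆ T (k + 1) := fun t ht => by
      have := hZk (mem_sdiff.1 ht).1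
      rw [usedBy_succ, mem_union] at this
      exact this.resolve_left (mem_sdiff.1 ht).2
    have hpipe : pipeTools n T M₀ (k + 1) ⊆ M₀ (k + 1) := fun t ht => (mem_pipeTools.1 ht).1
    calc _ ≤ (M₀ (k + 1)).card := card_le_card <|
          union_subset (union_subset (hM₀ _ hi).1 hpipe) (hpad.trans (hM₀ _ hi).1)
      _ = C := (hM₀ _ hi).2
  · have hpipe := (pipeTools_subset_usedBy (n := n) (M := M₀) (k + 1)).trans
      (monotone_usedBy (T := T) (by omega : k + 1 - 1 ≤ k + 1))
    calc _ ≤ Z.card := card_le_card <|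
          union_subset (union_subset ((subset_usedBy (by omega) le_rfl).trans hkZ)
            (hpipe.trans hkZ)) sdiff_subset
      _ = C := hZ

variable {M : ℕ → Finset ℕ}

theorem mem_or_mem_sdiff_of_mem_runStarts (hM : IsLazy n (demand n T M₀ Z) Z M) {j t : ℕ}
    (hs : ⟨j, t⟩ ∈ runStarts n M) : t ∈ T j ∨ t ∈ Z \ usedBy T (j - 1) := by
  obtain ⟨hM0, hM⟩ := hM
  obtain ⟨hjn, hj₁, -, hstart, hrun⟩ := mem_runStarts.1 hs
  have hdem : ∀ l, 1 ≤ l → l ≤ n → demand n T M₀ Z l ⊆ M l := fun l h₁ h₂ =>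
    (hM l (mem_Icc.2 ⟨h₁, h₂⟩)).1
  have htj := (hM j (mem_Icc.2 ⟨hj₁, hjn⟩)).2 (hrun j le_rfl le_rfl)
  rcases hstart with rfl | hout
  · rw [mem_union, mem_demand, hM0] at htj
    rcases htj with (ht | hpipe | hpad) | hZ
    · exact Or.inl ht
    · simpa [usedBy_zero] using pipeTools_subset_usedBy 1 hpipe
    · exact Or.inr hpad
    · exact Or.inr (by simpa [usedBy_zero] using hZ)
  rcases mem_demand.1 ((mem_union.1 htj).resolve_right hout) with ht | hpipe | hpad
  · exact Or.inl ht
  · -- a tool that a pipe of `M₀` carries across `j` is already held at `j - 1`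
    obtain ⟨-, s, e, hp, hsj, hje⟩ := mem_pipeTools.1 hpipe
    refine absurd ?_ hout
    rcases Nat.lt_or_ge s (j - 1) with hs | hs
    · refine hdem (j - 1) (by omega) (by omega) (mem_demand.2 (Or.inr (Or.inl ?_)))
      exact mem_pipeTools.2 ⟨(hp.2.2.2.2.2 _ hs (by omega)).2, s, e, hp, hs, by omega⟩
    · rw [show j - 1 = s by omega]
      exact hdem s hp.1 (by omega) (mem_demand.2 (Or.inl hp.2.2.2.1))
  · exact Or.inr hpad

theorem everyRunUsed_of_isLazy (hZ : Z ⊆ usedBy T n) (hM : IsLazy n (demand n T M₀ Z) Z M) :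
    EveryRunUsed n T M := by
  intro j t hs
  obtain ⟨hjn, hr⟩ := mem_runStarts.1 hs
  rcases mem_or_mem_sdiff_of_mem_runStarts hM hs with ht | hpad
  · exact ⟨j, hjn, ht, hr⟩
  obtain ⟨htZ, hunused⟩ := mem_sdiff.1 hpad
  obtain ⟨k, hk₁, hkn, htk, hfirst⟩ := exists_first_use (hZ htZ)
  have hjk : j ≤ k := by
    by_contra! h
    exact hunused (monotone_usedBy (by omega : k ≤ j - 1) (subset_usedBy hk₁ le_rfl htk))
  refine ⟨k, hkn, htk, hr.one_le, hjk, hr.start, fun l hjl hlk => ?_⟩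
  have hl : l ∈ Icc 1 n := mem_Icc.2 ⟨hr.one_le.trans hjl, hlk.trans hkn⟩
  have hpad' : t ∈ Z \ usedBy T (l - 1) := mem_sdiff.2 ⟨htZ, hfirst (l - 1) (by omega)⟩
  exact (hM.2 l hl).1 (mem_demand.2 (Or.inr (Or.inr hpad')))

theorem exists_everyRunUsed {m : ℕ} (hCm : C ≤ m) (hcover : (Icc 1 n).biUnion T = Icc 1 m)
    (hM₀ : M₀ ∈ MS n C T) :
    ∃ M ∈ MS n C T, pipeEnds n T M₀ ⊆ pipeEnds n T M ∧ EveryRunUsed n T M := by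
  -- `Z` consists of `C` tools taken in order of first use.
  obtain ⟨Z, hZused, hZcard, hchain⟩ := exists_card_eq_forall_subset_or_superset
    (monotone_usedBy (T := T)) (N := n) (C := C) (by rwa [usedBy, hcover, Nat.card_Icc])
  obtain ⟨M, hlazy, hMcard⟩ := exists_isLazy n hZcard fun i hi =>
    card_demand_le hM₀ hZcard hchain hi
  have hdem : ∀ i ∈ Icc 1 n, demand n T M₀ Z i ⊆ M i := fun i hi => (hlazy.2 i hi).1
  refine ⟨M, fun i hi => ⟨fun t ht => hdem i hi (mem_demand.2 (Or.inl ht)), hMcard i hi⟩,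
    pipeEnds_subset_pipeEnds fun i hi t ht => hdem i hi (mem_demand.2 (Or.inr (Or.inl ht))),
    everyRunUsed_of_isLazy hZused hlazy⟩

end Construction

theorem MS_nonempty {n C m : ℕ} {T : ℕ → Finset ℕ} (hCm : C ≤ m)
    (hT : ∀ i ∈ Icc 1 n, (T i).card ≤ C) (hTsub : ∀ i ∈ Icc 1 n, T i ⊆ Icc 1 m) :
    (MS n C T).Nonempty := by
  have h : ∀ i, ∃ u : Finset ℕ, i ∈ Icc 1 n → T i ⊆ u ∧ u.card = C := fun i => by
    by_cases hi : i ∈ Icc 1 n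
    · obtain ⟨u, hu, -, hcard⟩ :=
        exists_subsuperset_card_eq (hTsub i hi) (hT i hi) (by simpa using hCm)
      exact ⟨u, fun _ => ⟨hu, hcard⟩⟩
    · exact ⟨∅, fun h => absurd h hi⟩
  choose M hM using h
  exact ⟨M, hM⟩

end ToolSwitching

/-- Theorem 1: for a fixed job sequence,
`min_{M ∈ M(S)} switches(M) = Σᵢ |Tᵢ| − C − max_{M ∈ M(S)} |T(M)|`. -/
theorem theorem1 (n C m : ℕ) (T : ℕ → Finset ℕ)
    (hn : 1 ≤ n) (hCm : C < m)
    (hT : ∀ i ∈ Finset.Icc 1 n, (T i).card ≤ C)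
    (hTsub : ∀ i ∈ Finset.Icc 1 n, T i ⊆ Finset.Icc 1 m)
    (hcover : (Finset.Icc 1 n).biUnion T = Finset.Icc 1 m) :
    ((sInf {k : ℕ | ∃ M ∈ MS n C T, switches n C M = k} : ℕ) : ℤ) =
      (∑ i ∈ Finset.Icc 1 n, ((T i).card : ℤ)) - C -
        ((sSup {k : ℕ | ∃ M ∈ MS n C T, (pipeSet n T M).ncard = k} : ℕ) : ℤ) := by
  set pipes := {k : ℕ | ∃ M ∈ MS n C T, (pipeSet n T M).ncard = k}
  set sw := {k : ℕ | ∃ M ∈ MS n C T, switches n C M = k}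
  obtain ⟨M₁, hM₁⟩ := ToolSwitching.MS_nonempty hCm.le hT hTsub
  have hbdd : BddAbove pipes := ⟨∑ i ∈ Icc 1 n, (T i).card, by
    rintro _ ⟨M, -, rfl⟩
    rw [ToolSwitching.ncard_pipeSet, ← ToolSwitching.card_occurrences]
    exact card_le_card ToolSwitching.pipeEnds_subset⟩
  obtain ⟨M₀, hM₀, hp₀⟩ := Nat.sSup_mem (s := pipes) ⟨_, M₁, hM₁, rfl⟩ hbdd
  obtain ⟨Ms, hMs, hs⟩ := Nat.sInf_mem (s := sw) ⟨_, M₁, hM₁, rfl⟩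
  obtain ⟨M, hM, hpipes, hused⟩ := ToolSwitching.exists_everyRunUsed hCm.le hcover hM₀
  have hlow := ToolSwitching.sum_card_le_ncard_pipeSet_add hn hMs
  have hup := ToolSwitching.ncard_pipeSet_add_le_sum_card hn hM hused
  have hMs_le : (pipeSet n T Ms).ncard ≤ sSup pipes := le_csSup hbdd ⟨Ms, hMs, rfl⟩
  have hle_M : sSup pipes ≤ (pipeSet n T M).ncard := by
    rw [← hp₀, ToolSwitching.ncard_pipeSet, ToolSwitching.ncard_pipeSet]
    exact card_le_card hpipes
  have hsw : sInf sw ≤ switches n C M := Nat.sInf_le ⟨M, hM, rfl⟩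
  rw [← Nat.cast_sum]
  omega
end

section
/- Let (K, K') be a valid exchange for L (removing the pipes K from L allows constructing the pipe set K' with |K'| > |K|). If there exist π = (s,e,t) ∈ K and τ = (s',e',t') ∈ K' such that needed_instants(π) ∩ needed_instants(K') ⊆ needed_instants(τ), then (K, K') is not minimal: there is a valid exchange (K̃, K̃') with K̃ ⊆ K, K̃' ⊆ K' and (K̃, K̃') ≠ (K, K'). -/
/-- `possib_pipes(S)`: potential pipes `p = (s, e, t)`. -/
def PossibPipe (n C : ℕ) (T : ℕ → Finset ℕ) (p : ℕ × ℕ × ℕ) : Prop :=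
  1 ≤ p.1 ∧ p.1 < p.2.1 ∧ p.2.1 ≤ n ∧ p.2.2 ∈ T p.1 ∧ p.2.2 ∈ T p.2.1 ∧
    ∀ i, p.1 < i → i < p.2.1 → p.2.2 ∉ T i ∧ (T i).card < C

/-- `p = (s, e, t)` is a pipe of the state sequence `L`. -/
def IsPipeOf (n C : ℕ) (T L : ℕ → Finset ℕ) (p : ℕ × ℕ × ℕ) : Prop :=
  PossibPipe n C T p ∧ ∀ i, p.1 < i → i < p.2.1 → p.2.2 ∈ L i

/-- Remove the pipes of `K` from `L`, freeing their slots. -/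
def removePipes (L : ℕ → Finset ℕ) (K : Finset (ℕ × ℕ × ℕ)) : ℕ → Finset ℕ :=
  fun i => (L i).filter (fun t => ¬ ∃ p ∈ K, p.2.2 = t ∧ p.1 < i ∧ i < p.2.1)

/-- The whole pipe set `K'` can be constructed in the state sequence `L`:
each is a potential pipe whose tool is absent at all intermediate instants,
and at each instant the magazine has enough empty slots to host all of them. -/
def CanConstructSet (n C : ℕ) (T L : ℕ → Finset ℕ)
    (K' : Finset (ℕ × ℕ × ℕ)) : Prop :=
  (∀ p ∈ K', PossibPipe n C T p ∧
      ∀ j, p.1 < j → j < p.2.1 → p.2.2 ∉ L j) ∧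
  ∀ j, 1 ≤ j → j ≤ n →
    (L j).card + (K'.filter (fun p => p.1 < j ∧ j < p.2.1)).card ≤ C

/-- `(K, K')` is a valid exchange for `L`: `K` consists of pipes of `L`,
after removing them the whole set `K'` can be constructed, and `|K'| > |K|`. -/
def ValidExchange (n C : ℕ) (T L : ℕ → Finset ℕ)
    (K K' : Finset (ℕ × ℕ × ℕ)) : Prop :=
  (∀ p ∈ K, IsPipeOf n C T L p) ∧
    CanConstructSet n C T (removePipes L K) K' ∧ K.card < K'.card

/-- A valid exchange minimal under componentwise inclusion
(an element of `K_min(L)`). -/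
def MinimalExchange (n C : ℕ) (T L : ℕ → Finset ℕ)
    (K K' : Finset (ℕ × ℕ × ℕ)) : Prop :=
  ValidExchange n C T L K K' ∧
    ∀ K₁ K₁', K₁ ⊆ K → K₁' ⊆ K' → ValidExchange n C T L K₁ K₁' →
      K₁ = K ∧ K₁' = K'

/-- `needed_instants(π)` for a pipe `π = (s, e, t)`: the instants
`s+1, …, e-1` at which the pipe occupies a slot. -/
def neededInstants (p : ℕ × ℕ × ℕ) : Finset ℕ := Finset.Ioo p.1 p.2.1

/-- `needed_instants(K)` for a set of pipes. -/
def neededInstantsSet (K : Finset (ℕ × ℕ × ℕ)) : Finset ℕ :=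
  K.biUnion neededInstants

/-- `L` is obtained from `(T₁, …, Tₙ)` by only constructing pipes. -/
def BuiltByPipes (n C : ℕ) (T L : ℕ → Finset ℕ) : Prop :=
  ∀ i ∈ Finset.Icc 1 n, ∀ t ∈ L i, t ∉ T i →
    ∃ p : ℕ × ℕ × ℕ, IsPipeOf n C T L p ∧ p.2.2 = t ∧ p.1 < i ∧ i < p.2.1

/-- Lemma 2.3: if `(K, K')` is a valid exchange for `L` and
there are `π ∈ K`, `τ ∈ K'` with
`needed_instants(π) ∩ needed_instants(K') ⊆ needed_instants(τ)`, then
`(K, K')` is not minimal: some strictly smaller componentwise pair is still a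
valid exchange. -/
theorem exchange_not_minimal (n C : ℕ) (T L : ℕ → Finset ℕ)
    (hTL : ∀ i ∈ Finset.Icc 1 n, T i ⊆ L i)
    (hcard : ∀ i ∈ Finset.Icc 1 n, (L i).card ≤ C)
    (hbuilt : BuiltByPipes n C T L)
    (K K' : Finset (ℕ × ℕ × ℕ))
    (hex : ValidExchange n C T L K K')
    (π τ : ℕ × ℕ × ℕ) (hπ : π ∈ K) (hτ : τ ∈ K')
    (hsub : neededInstants π ∩ neededInstantsSet K' ⊆ neededInstants τ) :
    ¬ MinimalExchange n C T L K K' ∧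
      ∃ K₁ K₁', K₁ ⊆ K ∧ K₁' ⊆ K' ∧ ValidExchange n C T L K₁ K₁' ∧
        (K₁ ≠ K ∨ K₁' ≠ K') := by
  classical
  obtain ⟨hK, ⟨hC1, hC2⟩, hlt⟩ := hex
  set σ : ℕ × ℕ × ℕ := if π ∈ K' then π else τ with hσdef
  have hσK' : σ ∈ K' := by
    rw [hσdef]; split_ifs with h; exacts [h, hτ]
  have hσsub : neededInstants π ∩ neededInstantsSet K' ⊆ neededInstants σ := by
    rw [hσdef]; split_ifs with h
    · exact fun x hx => (Finset.mem_inter.mp hx).1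
    · exact hsub
  have hπσ : π ∈ K' → σ = π := fun h => by rw [hσdef, if_pos h]
  have hπpipe := hK π hπ
  have key : ∀ p, PossibPipe n C T p → p.2.2 = π.2.2 →
      ∀ j, p.1 < j → j < p.2.1 → π.1 < j → j < π.2.1 → p = π := by
    intro p hp ht j h1 h2 h3 h4
    obtain ⟨-, -, -, hpT1, hpT2, hpmid⟩ := hp
    obtain ⟨⟨-, -, -, hπT1, hπT2, hπmid⟩, -⟩ := hπpipe
    have e1 : p.1 = π.1 := by
      rcases lt_trichotomy p.1 π.1 with h | h | h
      · exact absurd hπT1 (by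
          have := (hpmid π.1 h (lt_trans h3 h2)).1
          rwa [ht] at this)
      · exact h
      · exact absurd hpT1 (by
          have := (hπmid p.1 h (lt_trans h1 h4)).1
          rwa [← ht] at this)
    have e2 : p.2.1 = π.2.1 := by
      rcases lt_trichotomy p.2.1 π.2.1 with h | h | h
      · exact absurd hpT2 (by
          have := (hπmid p.2.1 (lt_trans h3 h2) h).1
          rwa [← ht] at this)
      · exact h
      · exact absurd hπT2 (by
          have := (hpmid π.2.1 (lt_trans h1 h4) h).1
          rwa [ht] at this)
    exact Prod.ext_iff.mpr ⟨e1, Prod.ext_iff.mpr ⟨e2, ht⟩⟩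
  have hrem : ∀ j x, x ∈ removePipes L (K.erase π) j →
      x ∈ removePipes L K j ∨ (x = π.2.2 ∧ π.1 < j ∧ j < π.2.1 ∧ x ∈ L j) := by
    intro j x hx
    simp only [removePipes, Finset.mem_filter] at hx ⊢
    by_cases h : ∃ p ∈ K, p.2.2 = x ∧ p.1 < j ∧ j < p.2.1
    · obtain ⟨p, hpK, hpt, hp1, hp2⟩ := h
      have hpπ : p = π := by
        by_contra hne
        exact hx.2 ⟨p, Finset.mem_erase.mpr ⟨hne, hpK⟩, hpt, hp1, hp2⟩
      subst hpπ
      exact Or.inr ⟨hpt.symm, hp1, hp2, hx.1⟩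
    · exact Or.inl ⟨hx.1, h⟩
  have hA : ∀ p ∈ K'.erase σ, ∀ j, p.1 < j → j < p.2.1 →
      p.2.2 ∉ removePipes L (K.erase π) j := by
    intro p hp j h1 h2 hin
    have hpK' : p ∈ K' := Finset.mem_of_mem_erase hp
    rcases hrem j _ hin with h | ⟨ht, h3, h4, -⟩
    · exact (hC1 p hpK').2 j h1 h2 h
    · have hpeq := key p ((hC1 p hpK').1) ht j h1 h2 h3 h4
      have hπK' : π ∈ K' := hpeq ▸ hpK'
      exact (Finset.mem_erase.mp hp).1 (hpeq.trans (hπσ hπK').symm)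
  have hB : ∀ j, 1 ≤ j → j ≤ n →
      (removePipes L (K.erase π) j).card +
        ((K'.erase σ).filter (fun p => p.1 < j ∧ j < p.2.1)).card ≤ C := by
    intro j hj1 hjn
    have hfull := hC2 j hj1 hjn
    have hfe : (K'.erase σ).filter (fun p => p.1 < j ∧ j < p.2.1) =
        (K'.filter (fun p => p.1 < j ∧ j < p.2.1)).erase σ := by
      ext x
      simp only [Finset.mem_filter, Finset.mem_erase]
      tauto
    by_cases hjπ : π.1 < j ∧ j < π.2.1
    · by_cases hjK' : ∃ p ∈ K', p.1 < j ∧ j < p.2.1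
      · have hjset : j ∈ neededInstantsSet K' := by
          obtain ⟨p, hp, h1, h2⟩ := hjK'
          exact Finset.mem_biUnion.mpr ⟨p, hp, Finset.mem_Ioo.mpr ⟨h1, h2⟩⟩
        have hjσ : j ∈ neededInstants σ :=
          hσsub (Finset.mem_inter.mpr
            ⟨Finset.mem_Ioo.mpr ⟨hjπ.1, hjπ.2⟩, hjset⟩)
        have hσcov : σ.1 < j ∧ j < σ.2.1 := Finset.mem_Ioo.mp hjσ
        have hcard1 : (removePipes L (K.erase π) j).card ≤
            (removePipes L K j).card + 1 := by
          have hsub' : removePipes L (K.erase π) j ⊆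
              Insert.insert π.2.2 (removePipes L K j) := by
            intro x hx
            rcases hrem j x hx with h | ⟨h, -⟩
            · exact Finset.mem_insert_of_mem h
            · exact h ▸ Finset.mem_insert_self _ _
          exact le_trans (Finset.card_le_card hsub') (Finset.card_insert_le _ _)
        have hσf : σ ∈ K'.filter (fun p => p.1 < j ∧ j < p.2.1) :=
          Finset.mem_filter.mpr ⟨hσK', hσcov⟩
        have hpos : 1 ≤ (K'.filter (fun p => p.1 < j ∧ j < p.2.1)).card :=
          Finset.card_pos.mpr ⟨σ, hσf⟩
        have hcard2 : ((K'.erase σ).filter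
            (fun p => p.1 < j ∧ j < p.2.1)).card =
            (K'.filter (fun p => p.1 < j ∧ j < p.2.1)).card - 1 := by
          rw [hfe, Finset.card_erase_of_mem hσf]
        omega
      · have hempty : (K'.erase σ).filter (fun p => p.1 < j ∧ j < p.2.1) = ∅ := by
          rw [Finset.filter_eq_empty_iff]
          intro p hp h
          exact hjK' ⟨p, Finset.mem_of_mem_erase hp, h⟩
        rw [hempty]
        simp only [Finset.card_empty, add_zero]
        exact le_trans (Finset.card_le_card (Finset.filter_subset _ _))
          (hcard j (Finset.mem_Icc.mpr ⟨hj1, hjn⟩))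
    · have h1 : removePipes L (K.erase π) j ⊆ removePipes L K j := by
        intro x hx
        rcases hrem j x hx with h | ⟨-, h3, h4, -⟩
        · exact h
        · exact absurd ⟨h3, h4⟩ hjπ
      refine le_trans (add_le_add (Finset.card_le_card h1)
        (Finset.card_le_card ?_)) hfull
      exact Finset.filter_subset_filter _ (Finset.erase_subset _ _)
  have hvalid : ValidExchange n C T L (K.erase π) (K'.erase σ) := by
    refine ⟨fun p hp => hK p (Finset.mem_of_mem_erase hp), ⟨?_, hB⟩, ?_⟩
    · intro p hp
      exact ⟨(hC1 p (Finset.mem_of_mem_erase hp)).1, hA p hp⟩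
    · rw [Finset.card_erase_of_mem hπ, Finset.card_erase_of_mem hσK']
      have h1 : 1 ≤ K.card := Finset.card_pos.mpr ⟨π, hπ⟩
      omega
  have hne : K.erase π ≠ K := by
    intro h
    have h2 := Finset.notMem_erase π K
    rw [h] at h2
    exact h2 hπ
  refine ⟨?_, K.erase π, K'.erase σ, Finset.erase_subset _ _,
    Finset.erase_subset _ _, hvalid, Or.inl hne⟩
  intro hmin
  exact hne (hmin.2 (K.erase π) (K'.erase σ) (Finset.erase_subset _ _)
    (Finset.erase_subset _ _) hvalid).1
end

section
/- If in a greedy pipe construction every pipe in possib_pipes(S) with end index < e that could be constructed was constructed before considering pipes ending at e, and (K,K') is a minimal valid exchange with min_end(K) > min_end(K'), then a contradiction follows; i.e., no minimal valid exchange (K,K') for the greedy output satisfies min_end(K) > min_end(K'). -/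
/-- Pick (arbitrary) `k` elements of a finite set of tools. -/
def takeSome (s : Finset ℕ) (k : ℕ) : Finset ℕ :=
  ((s.sort (· ≤ ·)).take k).toFinset

/-- Inner loop of the MPCA greedy construction for a fixed end `e`:
iterate `start = e-1, …, 1`, constructing every constructible candidate
pipe `(start, e, t)`. -/
def mpcaInner (C : ℕ) (T : ℕ → Finset ℕ) (e : ℕ) :
    ℕ → (ℕ → Finset ℕ) → ((ℕ → Finset ℕ) × ℕ)
  | 0, M => (M, 0)
  | k + 1, M =>
    let s := k + 1
    let candidates := (T s ∩ T e).filter fun t => ∀ i ∈ Finset.Ioo s e, t ∉ T i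
    let emptySlots :=
      if h : (Finset.Ioo s e).Nonempty then
        (Finset.Ioo s e).inf' h (fun i => C - (M i).card)
      else candidates.card
    let chosen := takeSome candidates (min candidates.card emptySlots)
    let M' := fun i => if i ∈ Finset.Ioo s e then M i ∪ chosen else M i
    let r := mpcaInner C T e k M'
    (r.1, r.2 + chosen.card)

/-- Outer loop of the MPCA greedy construction: the ends `e` are processed in
increasing order, so every pipe of `possib_pipes(S)` with end `< e` that could
be constructed has been constructed before pipes ending at `e` are
considered. -/
def mpcaOuter (C : ℕ) (T : ℕ → Finset ℕ) : ℕ → (ℕ → Finset ℕ) → ((ℕ → Finset ℕ) × ℕ)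
  | 0, M => (M, 0)
  | e + 1, M =>
    let r := mpcaOuter C T e M
    let r2 := mpcaInner C T (e + 1) e r.1
    (r2.1, r.2 + r2.2)

/- helpers -/
def gCand (T : ℕ → Finset ℕ) (e s : ℕ) : Finset ℕ :=
  (T s ∩ T e).filter fun t => ∀ i ∈ Finset.Ioo s e, t ∉ T i

def gSlots (C : ℕ) (T : ℕ → Finset ℕ) (e s : ℕ) (M : ℕ → Finset ℕ) : ℕ :=
  if h : (Finset.Ioo s e).Nonempty then
    (Finset.Ioo s e).inf' h (fun i => C - (M i).card)
  else (gCand T e s).card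

def gChosen (C : ℕ) (T : ℕ → Finset ℕ) (e s : ℕ) (M : ℕ → Finset ℕ) : Finset ℕ :=
  takeSome (gCand T e s) (min (gCand T e s).card (gSlots C T e s M))

def gStep (C : ℕ) (T : ℕ → Finset ℕ) (e s : ℕ) (M : ℕ → Finset ℕ) : ℕ → Finset ℕ :=
  fun i => if i ∈ Finset.Ioo s e then M i ∪ gChosen C T e s M else M i

lemma mpcaInner_succ (C : ℕ) (T : ℕ → Finset ℕ) (e k : ℕ) (M : ℕ → Finset ℕ) :
    (mpcaInner C T e (k+1) M).1 = (mpcaInner C T e k (gStep C T e (k+1) M)).1 := rfl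

lemma takeSome_subset (s : Finset ℕ) (k : ℕ) : takeSome s k ⊆ s := by
  intro x hx
  rw [takeSome, List.mem_toFinset] at hx
  exact (Finset.mem_sort (α := ℕ) (· ≤ ·)).1 (List.take_subset _ _ hx)

lemma takeSome_card (s : Finset ℕ) (k : ℕ) : (takeSome s k).card = min k s.card := by
  rw [takeSome, List.toFinset_card_of_nodup ((s.sort_nodup _).sublist (List.take_sublist _ _)),
    List.length_take, Finset.length_sort (α := ℕ) (· ≤ ·)]

lemma takeSome_self (s : Finset ℕ) (k : ℕ) (h : s.card ≤ k) : takeSome s k = s := by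
  rw [takeSome, List.take_of_length_le (by rw [Finset.length_sort (α := ℕ) (· ≤ ·)]; exact h), Finset.sort_toFinset]

lemma gChosen_subset (C : ℕ) (T : ℕ → Finset ℕ) (e s : ℕ) (M : ℕ → Finset ℕ) :
    gChosen C T e s M ⊆ gCand T e s := takeSome_subset _ _

lemma gChosen_card (C : ℕ) (T : ℕ → Finset ℕ) (e s : ℕ) (M : ℕ → Finset ℕ) :
    (gChosen C T e s M).card = min (gCand T e s).card (gSlots C T e s M) := by
  rw [gChosen, takeSome_card]
  omega

lemma inner_mono (C : ℕ) (T : ℕ → Finset ℕ) (e : ℕ) :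
    ∀ (k : ℕ) (M : ℕ → Finset ℕ) (i : ℕ), M i ⊆ (mpcaInner C T e k M).1 i := by
  intro k
  induction k with
  | zero => intro M i; exact fun _ h => h
  | succ k ih =>
    intro M i
    rw [mpcaInner_succ]
    refine fun x hx => ih _ i ?_
    unfold gStep
    split
    · exact Finset.mem_union_left _ hx
    · exact hx

lemma outer_mono (C : ℕ) (T : ℕ → Finset ℕ) :
    ∀ (d : ℕ) (M : ℕ → Finset ℕ) (i : ℕ), M i ⊆ (mpcaOuter C T d M).1 i := by
  intro d
  induction d with
  | zero => exact fun M i _ h => h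
  | succ d ih =>
    intro M i x hx
    show x ∈ (mpcaInner C T (d+1) d (mpcaOuter C T d M).1).1 i
    exact inner_mono _ _ _ _ _ i (ih M i hx)

lemma outer_le (C : ℕ) (T : ℕ → Finset ℕ) (M : ℕ → Finset ℕ) :
    ∀ (d e : ℕ), e ≤ d → ∀ i, (mpcaOuter C T e M).1 i ⊆ (mpcaOuter C T d M).1 i := by
  intro d
  induction d with
  | zero => intro e he i; interval_cases e; exact fun _ h => h
  | succ d ih =>
    intro e he i
    rcases Nat.lt_or_ge e (d+1) with h | h
    · intro x hx
      show x ∈ (mpcaInner C T (d+1) d (mpcaOuter C T d M).1).1 i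
      exact inner_mono _ _ _ _ _ i (ih e (by omega) i hx)
    · have : e = d + 1 := by omega
      subst this; exact fun _ h => h

/-- Invariant during the inner loop at end `E`, counter `k`. -/
def gInv (T : ℕ → Finset ℕ) (E k : ℕ) (M : ℕ → Finset ℕ) : Prop :=
  ∀ j t, t ∈ M j → t ∈ T j ∨ ∃ a b, a < j ∧ j < b ∧ t ∈ T a ∧ t ∈ T b ∧
    (b < E ∨ (b = E ∧ k < a))

def gOutInv (T : ℕ → Finset ℕ) (E : ℕ) (M : ℕ → Finset ℕ) : Prop :=
  ∀ j t, t ∈ M j → t ∈ T j ∨ ∃ a b, a < j ∧ j < b ∧ t ∈ T a ∧ t ∈ T b ∧ b ≤ E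

lemma gInv_step (C : ℕ) (T : ℕ → Finset ℕ) (e k : ℕ) (M : ℕ → Finset ℕ)
    (h : gInv T e (k+1) M) : gInv T e k (gStep C T e (k+1) M) := by
  intro j t ht
  unfold gStep at ht
  split at ht
  case isTrue hj =>
    rcases Finset.mem_union.1 ht with ht | ht
    · rcases h j t ht with h1 | ⟨a, b, h1, h2, h3, h4, h5⟩
      · exact Or.inl h1
      · exact Or.inr ⟨a, b, h1, h2, h3, h4, by omega⟩
    · have := gChosen_subset C T e (k+1) M ht
      rw [gCand, Finset.mem_filter, Finset.mem_inter] at this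
      rw [Finset.mem_Ioo] at hj
      exact Or.inr ⟨k+1, e, hj.1, hj.2, this.1.1, this.1.2, Or.inr ⟨rfl, by omega⟩⟩
  case isFalse =>
    rcases h j t ht with h1 | ⟨a, b, h1, h2, h3, h4, h5⟩
    · exact Or.inl h1
    · exact Or.inr ⟨a, b, h1, h2, h3, h4, by omega⟩

lemma inner_gInv (C : ℕ) (T : ℕ → Finset ℕ) (e : ℕ) :
    ∀ (k : ℕ) (M : ℕ → Finset ℕ), gInv T e k M → gInv T e 0 (mpcaInner C T e k M).1 := by
  intro k
  induction k with
  | zero => intro M h; exact h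
  | succ k ih =>
    intro M h
    rw [mpcaInner_succ]
    exact ih _ (gInv_step C T e k M h)

def gCardB (n C : ℕ) (M : ℕ → Finset ℕ) : Prop :=
  ∀ j, 1 ≤ j → j ≤ n → (M j).card ≤ C

lemma gStep_card (n C : ℕ) (T : ℕ → Finset ℕ) (e s : ℕ) (M : ℕ → Finset ℕ)
    (he : e ≤ n) (h : gCardB n C M) : gCardB n C (gStep C T e s M) := by
  intro j h1 h2
  unfold gStep
  split
  case isTrue hj =>
    rw [Finset.mem_Ioo] at hj
    have hb : gSlots C T e s M ≤ C - (M j).card := by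
      rw [gSlots, dif_pos ⟨j, Finset.mem_Ioo.2 hj⟩]
      exact Finset.inf'_le _ (Finset.mem_Ioo.2 hj)
    have hc : (gChosen C T e s M).card ≤ C - (M j).card := by
      rw [gChosen_card]; omega
    have hj' : (M j).card ≤ C := h j h1 (by omega)
    calc (M j ∪ gChosen C T e s M).card ≤ (M j).card + (gChosen C T e s M).card :=
          Finset.card_union_le _ _
      _ ≤ C := by omega
  case isFalse => exact h j h1 h2

lemma inner_card (n C : ℕ) (T : ℕ → Finset ℕ) (e : ℕ) (he : e ≤ n) :
    ∀ (k : ℕ) (M : ℕ → Finset ℕ), gCardB n C M → gCardB n C (mpcaInner C T e k M).1 := by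
  intro k
  induction k with
  | zero => intro M h; exact h
  | succ k ih =>
    intro M h
    rw [mpcaInner_succ]
    exact ih _ (gStep_card n C T e _ M he h)

lemma outer_card (n C : ℕ) (T : ℕ → Finset ℕ) (hT : gCardB n C T) :
    ∀ e, e ≤ n → gCardB n C (mpcaOuter C T e T).1 := by
  intro e
  induction e with
  | zero => intro _; exact hT
  | succ e ih =>
    intro he
    show gCardB n C (mpcaInner C T (e+1) e (mpcaOuter C T e T).1).1
    exact inner_card n C T (e+1) he e _ (ih (by omega))

lemma outer_inv (C : ℕ) (T : ℕ → Finset ℕ) :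
    ∀ e, gOutInv T e (mpcaOuter C T e T).1 := by
  intro e
  induction e with
  | zero => intro j t ht; exact Or.inl ht
  | succ e ih =>
    have h1 : gInv T (e+1) e (mpcaOuter C T e T).1 := by
      intro j t ht
      rcases ih j t ht with h | ⟨a, b, ha, hb, hc, hd, hE⟩
      · exact Or.inl h
      · exact Or.inr ⟨a, b, ha, hb, hc, hd, Or.inl (by omega)⟩
    have h2 := inner_gInv C T (e+1) e _ h1
    intro j t ht
    rcases h2 j t ht with h | ⟨a, b, ha, hb, hc, hd, hE⟩
    · exact Or.inl h
    · exact Or.inr ⟨a, b, ha, hb, hc, hd, by omega⟩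

lemma inner_main (n C : ℕ) (T : ℕ → Finset ℕ) (e s t : ℕ)
    (hs1 : 1 ≤ s) (hen : e ≤ n) (hne : (Finset.Ioo s e).Nonempty)
    (ht1 : t ∈ T s) (ht2 : t ∈ T e) (ht3 : ∀ i ∈ Finset.Ioo s e, t ∉ T i) :
    ∀ (k : ℕ) (M : ℕ → Finset ℕ), s ≤ k → gInv T e k M → gCardB n C M →
    (∀ j ∈ Finset.Ioo s e, t ∈ (mpcaInner C T e k M).1 j) ∨
    (∃ j ∈ Finset.Ioo s e, ∃ S : Finset ℕ,
      S ⊆ (mpcaInner C T e k M).1 j ∧ S.card = C ∧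
      ∀ u ∈ S, u ∈ T j ∨ ∃ a b, a < j ∧ j < b ∧ b ≤ e ∧ u ∈ T a ∧ u ∈ T b) := by
  intro k
  induction k with
  | zero => intro M hk; omega
  | succ k ih =>
    intro M hk hInv hCard
    rcases Nat.lt_or_ge k s with hks | hks
    · -- k + 1 = s : the step constructing pipes starting at s
      have hksx : k + 1 = s := by omega
      subst hksx
      have htc : t ∈ gCand T e (k+1) := by
        rw [gCand, Finset.mem_filter, Finset.mem_inter]
        exact ⟨⟨ht1, ht2⟩, ht3⟩
      rcases le_or_gt (gCand T e (k+1)).card (gSlots C T e (k+1) M) with hc | hc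
      · -- all candidates constructed, including t
        left
        intro j hj
        rw [mpcaInner_succ]
        refine inner_mono C T e k _ j ?_
        unfold gStep
        rw [if_pos hj]
        refine Finset.mem_union_right _ ?_
        rw [gChosen, min_eq_left hc, takeSome_self _ _ le_rfl]
        exact htc
      · -- blocked: some instant j is (or becomes) full
        have hslots : gSlots C T e (k+1) M =
            (Finset.Ioo (k+1) e).inf' hne (fun i => C - (M i).card) := dif_pos hne
        obtain ⟨j, hj, hjeq⟩ := Finset.exists_mem_eq_inf' hne (fun i => C - (M i).card)
        right
        refine ⟨j, hj, M j ∪ gChosen C T e (k+1) M, ?_, ?_, ?_⟩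
        · rw [mpcaInner_succ]
          intro x hx
          refine inner_mono C T e k _ j ?_
          unfold gStep
          rw [if_pos hj]
          exact hx
        · -- card = C
          have hdisj : Disjoint (M j) (gChosen C T e (k+1) M) := by
            rw [Finset.disjoint_right]
            intro u hu huM
            have hcand := gChosen_subset C T e (k+1) M hu
            rw [gCand, Finset.mem_filter, Finset.mem_inter] at hcand
            rcases hInv j u huM with h | ⟨a, b, ha, hb, hTa, hTb, hE⟩
            · exact hcand.2 j hj h
            · rw [Finset.mem_Ioo] at hj
              rcases hE with hE | ⟨hE, hka⟩
              · exact hcand.2 b (Finset.mem_Ioo.2 ⟨by omega, hE⟩) hTb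
              · exact hcand.2 a (Finset.mem_Ioo.2 ⟨by omega, by omega⟩) hTa
          rw [hslots, hjeq] at hc
          rw [Finset.card_union_of_disjoint hdisj, gChosen_card, hslots, hjeq,
            min_eq_right (le_of_lt hc)]
          have hMj : (M j).card ≤ C := by
            rw [Finset.mem_Ioo] at hj
            exact hCard j (by omega) (by omega)
          omega
        · -- all tools of S in T j or bracketed with b ≤ e
          intro u hu
          rcases Finset.mem_union.1 hu with hu | hu
          · rcases hInv j u hu with h | ⟨a, b, ha, hb, hTa, hTb, hE⟩
            · exact Or.inl h
            · exact Or.inr ⟨a, b, ha, hb, by omega, hTa, hTb⟩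
          · have hcand := gChosen_subset C T e (k+1) M hu
            rw [gCand, Finset.mem_filter, Finset.mem_inter] at hcand
            rw [Finset.mem_Ioo] at hj
            exact Or.inr ⟨k+1, e, hj.1, hj.2, le_rfl, hcand.1.1, hcand.1.2⟩
    · -- k + 1 > s : recurse
      have h1 := gInv_step C T e k M hInv
      have h2 := gStep_card n C T e (k+1) M hen hCard
      rw [mpcaInner_succ]
      exact ih _ hks h1 h2


/-- `min_end(K)`: the least end index of a pipe in `K`. -/
noncomputable def minEnd (K : Finset (ℕ × ℕ × ℕ)) : ℕ := sInf {e | ∃ p ∈ K, p.2.1 = e}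

/-- Case 3 of the proof of Theorem 2: for the state sequence
produced by the greedy pipe construction (which, processing ends in increasing
order, has constructed every constructible pipe with smaller end first), no
minimal valid exchange `(K, K')` satisfies `min_end(K) > min_end(K')`. -/
theorem no_minimal_exchange_case3 (n C m : ℕ) (T : ℕ → Finset ℕ)
    (hn : 1 ≤ n) (hCm : C < m)
    (hT : ∀ i ∈ Finset.Icc 1 n, (T i).card ≤ C)
    (hTsub : ∀ i ∈ Finset.Icc 1 n, T i ⊆ Finset.Icc 1 m)
    (L : ℕ → Finset ℕ) (hL : L = (mpcaOuter C T n T).1)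
    (K K' : Finset (ℕ × ℕ × ℕ))
    (hmin : MinimalExchange n C T L K K') :
    ¬ minEnd K' < minEnd K := by
  intro hlt
  obtain ⟨⟨hKpipes, ⟨hK'1, hK'2⟩, hcard⟩, hminml⟩ := hmin
  have hT' : gCardB n C T := fun j h1 h2 => hT j (Finset.mem_Icc.2 ⟨h1, h2⟩)
  have hLcard : gCardB n C L := hL ▸ outer_card n C T hT' n le_rfl
  -- K' is nonempty; pick a pipe p' realizing the minimal end of K'
  have hK'ne : K'.Nonempty := Finset.card_pos.1 (by omega)
  obtain ⟨q₀, hq₀⟩ := hK'ne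
  have hsetne : {e | ∃ p ∈ K', p.2.1 = e}.Nonempty := ⟨q₀.2.1, q₀, hq₀, rfl⟩
  obtain ⟨p', hp'K, hp'e⟩ := Nat.sInf_mem hsetne
  -- every pipe of K ends strictly later than p'
  have hKend : ∀ q ∈ K, p'.2.1 < q.2.1 := by
    intro q hq
    have h1 : minEnd K ≤ q.2.1 := Nat.sInf_le ⟨q, hq, rfl⟩
    have h2 : minEnd K' = p'.2.1 := hp'e.symm
    omega
  obtain ⟨hpos1, hpos2, hpos3, hpos4, hpos5, hpos6⟩ := (hK'1 p' hp'K).1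
  have habsent := (hK'1 p' hp'K).2
  -- a tool that is in T j or bracketed by T a, T b with a < j < b ≤ p'.2.1
  -- cannot belong to a pipe of K covering j
  have hsurvive : ∀ j u, p'.1 < j → j < p'.2.1 →
      (u ∈ T j ∨ ∃ a b, a < j ∧ j < b ∧ b ≤ p'.2.1 ∧ u ∈ T a ∧ u ∈ T b) →
      ¬ ∃ q ∈ K, q.2.2 = u ∧ q.1 < j ∧ j < q.2.1 := by
    rintro j u hj1 hj2 hprop ⟨q, hqK, hqt, hq1, hq2⟩
    have hqe := hKend q hqK
    have hqpos := (hKpipes q hqK).1.2.2.2.2.2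
    rcases hprop with h | ⟨a, b, ha, hb, hbe, hTa, hTb⟩
    · exact (hqpos j hq1 hq2).1 (hqt ▸ h)
    · exact (hqpos b (by omega) (by omega)).1 (hqt ▸ hTb)
  rcases Finset.eq_empty_or_nonempty (Finset.Ioo p'.1 p'.2.1) with hemp | hne
  · -- `Ioo p'.1 p'.2.1` is empty: then `(∅, {p'})` is a valid exchange,
    -- so by minimality `K = ∅`, contradicting `minEnd K' < minEnd K = 0`.
    · have hval : ValidExchange n C T L ∅ {p'} := by
        refine ⟨fun p hp => absurd hp (Finset.notMem_empty p), ⟨?_, ?_⟩, by simp⟩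
        · intro p hp
          rw [Finset.mem_singleton] at hp
          subst hp
          refine ⟨⟨hpos1, hpos2, hpos3, hpos4, hpos5, hpos6⟩, ?_⟩
          intro j hj1 hj2
          exact absurd (Finset.mem_Ioo.2 ⟨hj1, hj2⟩) (hemp ▸ Finset.notMem_empty j)
        · intro j h1 h2
          have h3 : (Finset.filter (fun p => p.1 < j ∧ j < p.2.1) {p'}) = ∅ := by
            rw [Finset.filter_eq_empty_iff]
            intro p hp
            rw [Finset.mem_singleton] at hp
            subst hp
            rintro ⟨ha, hb⟩
            exact absurd (Finset.mem_Ioo.2 ⟨ha, hb⟩) (hemp ▸ Finset.notMem_empty j)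
          rw [h3]
          have h4 : removePipes L ∅ j ⊆ L j := Finset.filter_subset _ _
          have := Finset.card_le_card h4
          have := hLcard j h1 h2
          simp only [Finset.card_empty, add_zero]
          omega
      obtain ⟨hKe, _⟩ := hminml ∅ {p'} (Finset.empty_subset K)
        (Finset.singleton_subset_iff.2 hp'K) hval
      subst hKe
      have : minEnd (∅ : Finset (ℕ × ℕ × ℕ)) = 0 := by
        rw [minEnd]
        convert Nat.sInf_empty
        simp
      omega
  · -- main case: `Ioo p'.1 p'.2.1` nonempty; analyze the greedy run at end `p'.2.1`
    obtain ⟨e₀, he₀⟩ : ∃ e₀, p'.2.1 = e₀ + 1 := ⟨p'.2.1 - 1, by omega⟩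
    set A := (mpcaOuter C T e₀ T).1 with hA
    have hInvA : gInv T (e₀ + 1) e₀ A := by
      intro j t ht
      rcases outer_inv C T e₀ j t ht with h | ⟨a, b, ha, hb, hc, hd, hE⟩
      · exact Or.inl h
      · exact Or.inr ⟨a, b, ha, hb, hc, hd, Or.inl (by omega)⟩
    have hCardA : gCardB n C A := outer_card n C T hT' e₀ (by omega)
    have hmain := inner_main n C T (e₀ + 1) p'.1 p'.2.2 hpos1 (by omega)
      (he₀ ▸ hne) hpos4 (he₀ ▸ hpos5) (fun i hi => by
        rw [Finset.mem_Ioo] at hi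
        exact (hpos6 i hi.1 (by omega)).1)
      e₀ A (by omega) hInvA hCardA
    have hres : ∀ i, (mpcaInner C T (e₀ + 1) e₀ A).1 i ⊆ L i := by
      intro i
      have h1 : (mpcaInner C T (e₀ + 1) e₀ A).1 = (mpcaOuter C T (e₀ + 1) T).1 := rfl
      rw [h1, hL]
      exact outer_le C T T n (e₀ + 1) (by omega) i
    rcases hmain with htall | ⟨j, hj, S, hSsub, hScard, hSprop⟩
    · -- the tool of p' was constructed by the greedy: it survives `removePipes`
      obtain ⟨j, hj⟩ := hne
      rw [Finset.mem_Ioo] at hj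
      have htL : p'.2.2 ∈ L j := hres j (htall j (by rw [Finset.mem_Ioo]; omega))
      refine habsent j hj.1 hj.2 ?_
      rw [removePipes, Finset.mem_filter]
      exact ⟨htL, hsurvive j p'.2.2 hj.1 hj.2 (Or.inr ⟨p'.1, p'.2.1, hj.1, hj.2,
        le_rfl, hpos4, hpos5⟩)⟩
    · -- the greedy was blocked at a full instant j: no room for p' after removal
      rw [Finset.mem_Ioo] at hj
      have hjn : 1 ≤ j ∧ j ≤ n := by omega
      have hSL : S ⊆ removePipes L K j := by
        intro u hu
        rw [removePipes, Finset.mem_filter]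
        refine ⟨hres j (hSsub hu), ?_⟩
        refine hsurvive j u (by omega) (by omega) ?_
        rcases hSprop u hu with h | ⟨a, b, ha, hb, hbe, hTa, hTb⟩
        · exact Or.inl h
        · exact Or.inr ⟨a, b, ha, hb, by omega, hTa, hTb⟩
      have h1 : C ≤ (removePipes L K j).card := hScard ▸ Finset.card_le_card hSL
      have h2 := hK'2 j hjn.1 hjn.2
      have h3 : p' ∈ K'.filter (fun p => p.1 < j ∧ j < p.2.1) := by
        rw [Finset.mem_filter]
        exact ⟨hp'K, by omega, by omega⟩
      have h4 : 1 ≤ (K'.filter (fun p => p.1 < j ∧ j < p.2.1)).card :=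
        Finset.card_pos.2 ⟨p', h3⟩
      omega
end
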